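/- Let (C, R) be a chemical reaction network on N species whose reaction diagram has a single linkage class, and let x : [0,∞) → ℝ^N_{>0} be a trajectory of the associated non-autonomous mass-action system with bounded kinetics. Suppose x(t) remains bounded and dist(x(t), ∂ℝ^N_{≥0}) → 0 as t → ∞ (equivalently, min_i x_i(t) → 0). Then there does not exist a sequence of times t_n → ∞ such that C is partitioned along x_n := x(t_n) with the highest tier T_1 consisting of a union of linkage classes (equivalently, with T_1 equal to all of C). -/

import Mathlib

open Filter

/-- A chemical reaction network on `N` species: a finite set `C ⊆ ℤ^N_{≥0}` of complexes
and a finite set `R` of reactions `y → y'` with `y ≠ y'`, both endpoints complexes,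
such that every complex takes part in at least one reaction. -/
def IsNetwork {N : ℕ} (C : Finset (Fin N → ℕ)) (R : Finset ((Fin N → ℕ) × (Fin N → ℕ))) : Prop :=
  (∀ r ∈ R, r.1 ∈ C ∧ r.2 ∈ C ∧ r.1 ≠ r.2) ∧ (∀ y ∈ C, ∃ r ∈ R, r.1 = y ∨ r.2 = y)

/-- Directed edge of the reaction diagram. -/
def dirStep {N : ℕ} (R : Finset ((Fin N → ℕ) × (Fin N → ℕ))) (a b : Fin N → ℕ) : Prop :=
  (a, b) ∈ R

/-- Undirected edge of the reaction diagram. -/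
def symStep {N : ℕ} (R : Finset ((Fin N → ℕ) × (Fin N → ℕ))) (a b : Fin N → ℕ) : Prop :=
  (a, b) ∈ R ∨ (b, a) ∈ R

/-- A network is weakly reversible when each linkage class (connected component of the
reaction diagram, ignoring directions) is strongly connected as a directed graph:
whenever `b` is reachable from `a` ignoring directions, it is reachable along
directed reactions. -/
def WeaklyReversible {N : ℕ} (R : Finset ((Fin N → ℕ) × (Fin N → ℕ))) : Prop :=
  ∀ a b, Relation.ReflTransGen (symStep R) a b → Relation.ReflTransGen (dirStep R) a b

/-- The mass-action monomial `x^y = ∏ i, (x i)^(y i)` (with the convention `0^0 = 1`). -/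
noncomputable def monom {N : ℕ} (x : Fin N → ℝ) (y : Fin N → ℕ) : ℝ := ∏ i, x i ^ y i

/-- A complex, viewed as a real vector. -/
def cv {N : ℕ} (y : Fin N → ℕ) : Fin N → ℝ := fun i => (y i : ℝ)

/-- The set of complexes `C` is partitioned along the sequence `x` into the ordered
tiers `T 0 ≻ T 1 ≻ ⋯ ≻ T (P-1)` with constant `M > 1`. -/
def PartitionedAlong {N P : ℕ} (C : Finset (Fin N → ℕ)) (x : ℕ → Fin N → ℝ)
    (T : Fin P → Set (Fin N → ℕ)) (M : ℝ) : Prop :=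
  1 < M ∧
  (∀ i, (T i).Nonempty) ∧
  (∀ i j, i ≠ j → Disjoint (T i) (T j)) ∧
  (⋃ i, T i) = (C : Set (Fin N → ℕ)) ∧
  (∀ i : Fin P, ∀ yj ∈ T i, ∀ yk ∈ T i, ∀ n : ℕ,
    1 / M ≤ monom (x n) yk / monom (x n) yj ∧ monom (x n) yk / monom (x n) yj ≤ M) ∧
  (∀ i j : Fin P, i < j → ∀ yk ∈ T i, ∀ yj ∈ T j,
    Tendsto (fun n => monom (x n) yk / monom (x n) yj) atTop atTop)

/-- `T` is a (nonempty) union of linkage classes of the network `(C, R)`. -/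
def IsUnionOfLinkageClasses {N : ℕ} (C : Finset (Fin N → ℕ))
    (R : Finset ((Fin N → ℕ) × (Fin N → ℕ))) (T : Set (Fin N → ℕ)) : Prop :=
  T.Nonempty ∧ ∀ y ∈ T, ∀ y' ∈ C, Relation.ReflTransGen (symStep R) y y' → y' ∈ T

/-!
Suppose all complexes lie in one tier along `x (t n)`. Then `θ n = log x (t n)` has bounded
pairings with every reaction vector, while `‖θ n‖ → ∞` since `x (t n)` approaches the boundary.
A limit direction `u` of `θ n / ‖θ n‖` is therefore orthogonal to the stoichiometric subspace,
so `u ⬝ᵥ x` is a conservation law; `u ≤ 0` because `x` is bounded, and `u ≠ 0`. Hence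
`u ⬝ᵥ x t = u ⬝ᵥ x 0 < 0`, whereas `x i (t n) → 0` wherever `u i < 0`, forcing
`u ⬝ᵥ x (t n) → 0` along the subsequence.
-/

open Topology

section

variable {ι : Type*} [Fintype ι]

lemma tendsto_norm_log_atTop [Nonempty ι] {x : ℕ → ι → ℝ} (hpos : ∀ n i, 0 < x n i)
    (hinf : Tendsto (fun n => ⨅ i, x n i) atTop (𝓝 0)) :
    Tendsto (fun n => ‖fun i => Real.log (x n i)‖) atTop atTop := by
  have hinf_pos : ∀ n, 0 < ⨅ i, x n i := fun n => by
    obtain ⟨i, hi⟩ := exists_eq_ciInf_of_finite (f := x n)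
    exact hi ▸ hpos n i
  have hinf' : Tendsto (fun n => ⨅ i, x n i) atTop (𝓝[>] 0) :=
    tendsto_nhdsWithin_iff.mpr ⟨hinf, Eventually.of_forall hinf_pos⟩
  refine tendsto_atTop_mono (fun n => ?_)
    (tendsto_neg_atBot_atTop.comp (Real.tendsto_log_nhdsGT_zero.comp hinf'))
  obtain ⟨i, hi⟩ := exists_eq_ciInf_of_finite (f := x n)
  simp only [Function.comp_apply, ← hi]
  exact (neg_le_abs _).trans (norm_le_pi_norm (fun i => Real.log (x n i)) i)

lemma exists_tendsto_inv_norm_smul_nonpos {θ : ℕ → ι → ℝ} {b : ℝ}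
    (hθ : Tendsto (fun n => ‖θ n‖) atTop atTop) (hb : ∀ n i, θ n i ≤ b) :
    ∃ u : ι → ℝ, u ≠ 0 ∧ u ≤ 0 ∧ ∃ φ : ℕ → ℕ, StrictMono φ ∧
      Tendsto (fun j => ‖θ (φ j)‖⁻¹ • θ (φ j)) atTop (𝓝 u) := by
  have hball : ∀ n, ‖θ n‖⁻¹ • θ n ∈ Metric.closedBall (0 : ι → ℝ) 1 := fun n => by
    rw [mem_closedBall_zero_iff, norm_smul, norm_inv, norm_norm]
    exact inv_mul_le_one
  obtain ⟨u, -, φ, hφ, hu⟩ := (isCompact_closedBall (0 : ι → ℝ) 1).tendsto_subseq hball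
  have hθφ := hθ.comp hφ.tendsto_atTop
  refine ⟨u, ?_, fun i => ?_, φ, hφ, hu⟩
  · have hnorm : Tendsto (fun j => ‖‖θ (φ j)‖⁻¹ • θ (φ j)‖) atTop (𝓝 1) := by
      refine tendsto_const_nhds.congr' ?_
      filter_upwards [hθφ.eventually_gt_atTop 0] with j (hj : 0 < ‖θ (φ j)‖)
      rw [norm_smul, norm_inv, norm_norm, inv_mul_cancel₀ hj.ne']
    have hu1 : ‖u‖ = 1 := tendsto_nhds_unique hu.norm hnorm
    rintro rfl
    simp at hu1
  · have hcoord : Tendsto (fun j => ‖θ (φ j)‖⁻¹ * θ (φ j) i) atTop (𝓝 (u i)) :=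
      tendsto_pi_nhds.mp hu i
    have hbound : Tendsto (fun j => ‖θ (φ j)‖⁻¹ * |b|) atTop (𝓝 0) := by
      simpa using (tendsto_inv_atTop_zero.comp hθφ).mul_const |b|
    exact le_of_tendsto_of_tendsto' hcoord hbound fun j =>
      mul_le_mul_of_nonneg_left ((hb _ i).trans (le_abs_self b)) (by positivity)

lemma dotProduct_eq_zero_of_isBoundedUnder {θ : ℕ → ι → ℝ} {s : ℕ → ℝ} {u w : ι → ℝ}
    (hs : Tendsto s atTop atTop) (hu : Tendsto (fun j => (s j)⁻¹ • θ j) atTop (𝓝 u))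
    (hw : IsBoundedUnder (· ≤ ·) atTop fun j => ‖w ⬝ᵥ θ j‖) : w ⬝ᵥ u = 0 := by
  have hlim : Tendsto (fun j => w ⬝ᵥ ((s j)⁻¹ • θ j)) atTop (𝓝 (w ⬝ᵥ u)) :=
    ((continuous_const.dotProduct continuous_id).tendsto u).comp hu
  have hzero : Tendsto (fun j => w ⬝ᵥ ((s j)⁻¹ • θ j)) atTop (𝓝 0) := by
    simp only [dotProduct_smul, smul_eq_mul]
    exact (tendsto_inv_atTop_zero.comp hs).zero_mul_isBoundedUnder_le hw
  exact tendsto_nhds_unique hlim hzero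

lemma tendsto_atBot_of_inv_mul_tendsto_neg {α : Type*} {l : Filter α} {a s : α → ℝ} {c : ℝ}
    (hs : Tendsto s l atTop) (ha : Tendsto (fun j => (s j)⁻¹ * a j) l (𝓝 c)) (hc : c < 0) :
    Tendsto a l atBot := by
  refine (hs.atTop_mul_neg hc ha).congr' ?_
  filter_upwards [hs.eventually_gt_atTop 0] with j hj
  rw [mul_inv_cancel_left₀ hj.ne']

lemma tendsto_dotProduct_zero {α : Type*} {l : Filter α} {x : α → ι → ℝ} {u : ι → ℝ}
    (hx : ∀ i, u i ≠ 0 → Tendsto (fun n => x n i) l (𝓝 0)) :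
    Tendsto (fun n => u ⬝ᵥ x n) l (𝓝 0) := by
  have hterm : ∀ i, Tendsto (fun n => u i * x n i) l (𝓝 0) := fun i => by
    by_cases hi : u i = 0
    · simpa [hi] using tendsto_const_nhds
    · simpa using (hx i hi).const_mul (u i)
  simpa [dotProduct] using tendsto_finsetSum Finset.univ fun i _ => hterm i

lemma dotProduct_neg_of_nonpos_of_pos {u v : ι → ℝ} (hu : u ≤ 0) (hu0 : u ≠ 0)
    (hv : ∀ i, 0 < v i) : u ⬝ᵥ v < 0 := by
  obtain ⟨i, hi⟩ := Function.ne_iff.mp hu0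
  have hlt : ∑ j, u j * v j < ∑ _j : ι, (0 : ℝ) :=
    Finset.sum_lt_sum (fun j _ => mul_nonpos_of_nonpos_of_nonneg (hu j) (hv j).le)
      ⟨i, Finset.mem_univ i, mul_neg_of_neg_of_pos ((hu i).lt_of_ne hi) (hv i)⟩
  simpa [dotProduct] using hlt

lemma dotProduct_eq_of_hasDerivAt {x x' : ℝ → ι → ℝ} {u : ι → ℝ}
    (hx : ∀ t, 0 ≤ t → HasDerivAt x (x' t) t) (hu : ∀ t, 0 ≤ t → u ⬝ᵥ x' t = 0)
    {t : ℝ} (ht : 0 ≤ t) : u ⬝ᵥ x t = u ⬝ᵥ x 0 := by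
  have hderiv : ∀ s, 0 ≤ s → HasDerivAt (fun s => u ⬝ᵥ x s) 0 s := fun s hs => by
    rw [← hu s hs]
    exact HasDerivAt.fun_sum fun i _ => (hasDerivAt_pi.mp (hx s hs) i).const_mul (u i)
  exact constant_of_has_deriv_right_zero
    (fun s hs => (hderiv s hs.1).continuousAt.continuousWithinAt)
    (fun s hs => (hderiv s hs.1).hasDerivWithinAt) t ⟨ht, le_rfl⟩

end

lemma abs_log_le_log_of_inv_le_of_le {a M : ℝ} (hM : 0 < M) (h₁ : 1 / M ≤ a) (h₂ : a ≤ M) :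
    |Real.log a| ≤ Real.log M := by
  have ha : 0 < a := (one_div_pos.mpr hM).trans_le h₁
  refine abs_le.mpr ⟨?_, Real.log_le_log ha h₂⟩
  simpa [Real.log_inv] using Real.log_le_log (one_div_pos.mpr hM) h₁

lemma log_monom {N : ℕ} {x : Fin N → ℝ} (hx : ∀ i, 0 < x i) (y : Fin N → ℕ) :
    Real.log (monom x y) = cv y ⬝ᵥ fun i => Real.log (x i) := by
  rw [monom, Real.log_prod fun i _ => (pow_pos (hx i) _).ne']
  exact Finset.sum_congr rfl fun i _ => Real.log_pow _ _

lemma monom_pos {N : ℕ} {x : Fin N → ℝ} (hx : ∀ i, 0 < x i) (y : Fin N → ℕ) :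
    0 < monom x y :=
  Finset.prod_pos fun i _ => pow_pos (hx i) _

lemma PartitionedAlong.abs_dotProduct_log_le {N P : ℕ} {C : Finset (Fin N → ℕ)}
    {x : ℕ → Fin N → ℝ} {T : Fin P → Set (Fin N → ℕ)} {M : ℝ} (h : PartitionedAlong C x T M)
    (hx : ∀ n i, 0 < x n i) {i : Fin P} {y y' : Fin N → ℕ} (hy : y ∈ T i) (hy' : y' ∈ T i)
    (n : ℕ) : |(cv y' - cv y) ⬝ᵥ fun l => Real.log (x n l)| ≤ Real.log M := by
  rw [sub_dotProduct, ← log_monom (hx n), ← log_monom (hx n),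
    ← Real.log_div (monom_pos (hx n) y').ne' (monom_pos (hx n) y).ne']
  obtain ⟨h₁, h₂⟩ := h.2.2.2.2.1 i y hy y' hy' n
  exact abs_log_le_log_of_inv_le_of_le (one_pos.trans h.1) h₁ h₂

lemma PartitionedAlong.subset {N P : ℕ} {C : Finset (Fin N → ℕ)} {x : ℕ → Fin N → ℝ}
    {T : Fin P → Set (Fin N → ℕ)} {M : ℝ} (h : PartitionedAlong C x T M) (i : Fin P) :
    T i ⊆ C :=
  h.2.2.2.1 ▸ Set.subset_iUnion T i

lemma IsUnionOfLinkageClasses.mem_of_connected {N : ℕ} {C : Finset (Fin N → ℕ)}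
    {R : Finset ((Fin N → ℕ) × (Fin N → ℕ))} {T : Set (Fin N → ℕ)}
    (hT : IsUnionOfLinkageClasses C R T) (hTC : T ⊆ C)
    (hconn : ∀ y ∈ C, ∀ y' ∈ C, Relation.ReflTransGen (symStep R) y y')
    {y : Fin N → ℕ} (hy : y ∈ C) : y ∈ T := by
  obtain ⟨y₀, hy₀⟩ := hT.1
  exact hT.2 y₀ hy₀ y hy (hconn y₀ (hTC hy₀) y hy)

theorem stmt_6_general {N : ℕ} (hN : 0 < N)
    (C : Finset (Fin N → ℕ)) (R : Finset ((Fin N → ℕ) × (Fin N → ℕ)))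
    (hnet : IsNetwork C R)
    (hsingle : ∀ y ∈ C, ∀ y' ∈ C, Relation.ReflTransGen (symStep R) y y')
    (κ : ((Fin N → ℕ) × (Fin N → ℕ)) → ℝ → ℝ)
    (x : ℝ → Fin N → ℝ)
    (hpos : ∀ t : ℝ, 0 ≤ t → ∀ i, 0 < x t i)
    (hODE : ∀ t : ℝ, 0 ≤ t →
      HasDerivAt x (∑ r ∈ R, (κ r t * monom (x t) r.1) • (cv r.2 - cv r.1)) t)
    (hbdd : ∃ B : ℝ, ∀ t : ℝ, 0 ≤ t → ∀ i, x t i ≤ B)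
    (hdist : Tendsto (fun t => ⨅ i, x t i) atTop (nhds 0)) :
    ¬ ∃ tn : ℕ → ℝ, (∀ n, 0 ≤ tn n) ∧ Tendsto tn atTop atTop ∧
        ∃ (P : ℕ) (hP : 0 < P) (T : Fin P → Set (Fin N → ℕ)) (M : ℝ),
          PartitionedAlong C (fun n => x (tn n)) T M ∧
          IsUnionOfLinkageClasses C R (T ⟨0, hP⟩) := by
  rintro ⟨tn, htn0, htn, P, hP, T, M, hpart, hT₀⟩
  have : Nonempty (Fin N) := ⟨⟨0, hN⟩⟩
  obtain ⟨B, hB⟩ := hbdd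
  have hposn : ∀ n i, 0 < x (tn n) i := fun n => hpos _ (htn0 n)
  have hall : ∀ y ∈ C, y ∈ T ⟨0, hP⟩ := fun y hy =>
    hT₀.mem_of_connected (hpart.subset _) hsingle hy
  let θ : ℕ → Fin N → ℝ := fun n i => Real.log (x (tn n) i)
  have hθ : Tendsto (fun n => ‖θ n‖) atTop atTop :=
    tendsto_norm_log_atTop hposn (hdist.comp htn)
  obtain ⟨u, hu0, hule, φ, hφ, hu⟩ := exists_tendsto_inv_norm_smul_nonpos hθ
    (b := Real.log B) fun n i => Real.log_le_log (hposn n i) (hB _ (htn0 n) i)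
  have hnorm := hθ.comp hφ.tendsto_atTop
  have horth : ∀ r ∈ R, u ⬝ᵥ (cv r.2 - cv r.1) = 0 := fun r hr => by
    rw [dotProduct_comm]
    refine dotProduct_eq_zero_of_isBoundedUnder hnorm hu
      ⟨Real.log M, eventually_map.mpr (Eventually.of_forall fun j => ?_)⟩
    exact hpart.abs_dotProduct_log_le hposn (hall _ (hnet.1 r hr).1) (hall _ (hnet.1 r hr).2.1) _
  have hconst : ∀ n, u ⬝ᵥ x (tn n) = u ⬝ᵥ x 0 := fun n =>
    dotProduct_eq_of_hasDerivAt hODE (fun t _ => by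
      simp only [dotProduct_sum, dotProduct_smul]
      exact Finset.sum_eq_zero fun r hr => by rw [horth r hr, smul_zero]) (htn0 n)
  have hvanish : Tendsto (fun j => u ⬝ᵥ x (tn (φ j))) atTop (𝓝 0) := by
    refine tendsto_dotProduct_zero fun i hi => ?_
    have hθi : Tendsto (fun j => θ (φ j) i) atTop atBot :=
      tendsto_atBot_of_inv_mul_tendsto_neg hnorm (tendsto_pi_nhds.mp hu i) ((hule i).lt_of_ne hi)
    refine (Real.tendsto_exp_atBot.comp hθi).congr fun j => ?_
    exact Real.exp_log (hposn _ i)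
  simp only [hconst] at hvanish
  exact (dotProduct_neg_of_nonpos_of_pos hule hu0 (hpos 0 le_rfl)).ne
    (tendsto_nhds_unique tendsto_const_nhds hvanish)

/-- For a bounded trajectory of a single-linkage-class non-autonomous mass-action system
with bounded kinetics that approaches the boundary of the positive orthant, there is no
sequence of times `t n → ∞` along which the complexes are partitioned with the highest
tier consisting of a union of linkage classes. -/
theorem stmt_6 {N : ℕ} (hN : 0 < N)
    (C : Finset (Fin N → ℕ)) (R : Finset ((Fin N → ℕ) × (Fin N → ℕ)))
    (hnet : IsNetwork C R)
    (hsingle : ∀ y ∈ C, ∀ y' ∈ C, Relation.ReflTransGen (symStep R) y y')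
    (κ : ((Fin N → ℕ) × (Fin N → ℕ)) → ℝ → ℝ) (η : ℝ) (hη : 0 < η)
    (hκ : ∀ r ∈ R, ∀ t : ℝ, 0 ≤ t → η < κ r t ∧ κ r t < 1 / η)
    (x : ℝ → Fin N → ℝ)
    (hpos : ∀ t : ℝ, 0 ≤ t → ∀ i, 0 < x t i)
    (hODE : ∀ t : ℝ, 0 ≤ t →
      HasDerivAt x (∑ r ∈ R, (κ r t * monom (x t) r.1) • (cv r.2 - cv r.1)) t)
    (hbdd : ∃ B : ℝ, ∀ t : ℝ, 0 ≤ t → ∀ i, x t i ≤ B)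
    (hdist : Tendsto (fun t => ⨅ i, x t i) atTop (nhds 0)) :
    ¬ ∃ tn : ℕ → ℝ, (∀ n, 0 ≤ tn n) ∧ Tendsto tn atTop atTop ∧
        ∃ (P : ℕ) (hP : 0 < P) (T : Fin P → Set (Fin N → ℕ)) (M : ℝ),
          PartitionedAlong C (fun n => x (tn n)) T M ∧
          IsUnionOfLinkageClasses C R (T ⟨0, hP⟩) :=
  stmt_6_general hN C R hnet hsingle κ x hpos hODE hbdd hdist
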